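/- For the q = 3 model with J₀ = J₂ = 0 and J₁ = J (transfer matrix with rows (1, y, y²), (y, xy², y³), (y², y³, y⁴), largest eigenvalue λ = ½[(y⁴ + xy² + 1) + √Δ], Δ = 4y² + 2y⁴ + 4y⁶ + y⁸ - 2xy² - 2xy⁶ + x²y⁴ + 1), the per capita investment l(β) = -(1/(βλ))·(∂λ/∂y)·(∂y/∂D) evaluated at D = 0 equals 1 for all β and all J. -/

import Mathlib

/-! At `y = 1` both the trace part `y⁴ + xy² + 1` and `√Δ` have logarithmic derivative `2`
(because `Δ'(1) = 4Δ(1)`), so `∂λ/∂y = 2λ` there, and the factors `1/(βλ)` and `-β/2` cancel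
against it. -/

open Real

/-- The largest eigenvalue of the `q = 3` transfer matrix with `J₀ = J₂ = 0`,
`J₁ = J`, as a function of `x = e^{-βJ}` and `y = e^{-βD/2}`:
`λ = ½[(y⁴ + xy² + 1) + √Δ]` with
`Δ = 4y² + 2y⁴ + 4y⁶ + y⁸ - 2xy² - 2xy⁶ + x²y⁴ + 1`. -/
noncomputable def q3LamCase2 (x y : ℝ) : ℝ :=
  (1 / 2) * ((y ^ 4 + x * y ^ 2 + 1) +
    Real.sqrt (4 * y ^ 2 + 2 * y ^ 4 + 4 * y ^ 6 + y ^ 8 - 2 * x * y ^ 2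
      - 2 * x * y ^ 6 + x ^ 2 * y ^ 4 + 1))

theorem HasDerivAt.sqrt_of_eq_const_mul {f : ℝ → ℝ} {a c : ℝ} (hf : HasDerivAt f (c * f a) a)
    (ha : 0 < f a) : HasDerivAt (fun y => √(f y)) (c / 2 * √(f a)) a := by
  refine (hf.sqrt ha.ne').congr_deriv ?_
  have hs : 0 < √(f a) := sqrt_pos.mpr ha
  field_simp
  rw [sq_sqrt ha.le]

noncomputable def q3DiscCase2 (x y : ℝ) : ℝ :=
  4 * y ^ 2 + 2 * y ^ 4 + 4 * y ^ 6 + y ^ 8 - 2 * x * y ^ 2 - 2 * x * y ^ 6 + x ^ 2 * y ^ 4 + 1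

theorem q3LamCase2_eq (x y : ℝ) :
    q3LamCase2 x y = 1 / 2 * ((y ^ 4 + x * y ^ 2 + 1) + √(q3DiscCase2 x y)) := rfl

theorem q3DiscCase2_one (x : ℝ) : q3DiscCase2 x 1 = (x - 2) ^ 2 + 8 := by
  unfold q3DiscCase2
  ring

theorem q3DiscCase2_one_pos (x : ℝ) : 0 < q3DiscCase2 x 1 := by
  rw [q3DiscCase2_one]
  positivity

theorem hasDerivAt_q3DiscCase2_one (x : ℝ) :
    HasDerivAt (q3DiscCase2 x) (4 * q3DiscCase2 x 1) 1 := by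
  have h2 := hasDerivAt_pow 2 (1 : ℝ)
  have h4 := hasDerivAt_pow 4 (1 : ℝ)
  have h6 := hasDerivAt_pow 6 (1 : ℝ)
  have h8 := hasDerivAt_pow 8 (1 : ℝ)
  have h := (((((((h2.const_mul 4).add (h4.const_mul 2)).add (h6.const_mul 4)).add h8).sub
    (h2.const_mul (2 * x))).sub (h6.const_mul (2 * x))).add (h4.const_mul (x ^ 2))).add_const 1
  refine h.congr_deriv ?_
  unfold q3DiscCase2
  norm_num
  ring

theorem hasDerivAt_q3LamCase2_one (x : ℝ) :
    HasDerivAt (q3LamCase2 x) (2 * q3LamCase2 x 1) 1 := by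
  have htrace : HasDerivAt (fun y : ℝ => y ^ 4 + x * y ^ 2 + 1) (2 * (1 ^ 4 + x * 1 ^ 2 + 1)) 1 :=
    (((hasDerivAt_pow 4 1).add ((hasDerivAt_pow 2 1).const_mul x)).add_const 1).congr_deriv
      (by norm_num; ring)
  have hsqrt := (hasDerivAt_q3DiscCase2_one x).sqrt_of_eq_const_mul (q3DiscCase2_one_pos x)
  simp only [q3LamCase2_eq]
  refine ((htrace.add hsqrt).const_mul (1 / 2)).congr_deriv ?_
  ring

theorem q3LamCase2_one_pos (x : ℝ) : 0 < q3LamCase2 x 1 := by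
  have hs : |x - 2| ≤ √(q3DiscCase2 x 1) :=
    abs_le_sqrt (by rw [q3DiscCase2_one]; linarith)
  rw [q3LamCase2_eq]
  linarith [neg_abs_le (x - 2)]

/-- For the `q = 3` model with `J₀ = J₂ = 0`, `J₁ = J`, the per capita investment
`l(β) = -(1/(βλ))·(∂λ/∂y)·(∂y/∂D)|_{D=0}` equals `1` for all `β ≠ 0` and all `J`
(here `y = e^{-βD/2}` so `∂y/∂D|_{D=0} = -β/2`, and `y = 1` at `D = 0`). -/
theorem q3_case2_investment_is_one (β J : ℝ) (hβ : β ≠ 0) :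
    -(1 / (β * q3LamCase2 (exp (-β * J)) 1)) *
      (deriv (q3LamCase2 (exp (-β * J))) 1 * (-(β / 2))) = 1 := by
  generalize exp (-β * J) = x
  have hlam := (q3LamCase2_one_pos x).ne'
  rw [(hasDerivAt_q3LamCase2_one x).deriv]
  field_simp
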